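/- arXiv:2112.06210 — 4 statements merged into one kernel-verified Lean document; each statement's English description precedes it below -/
import Mathlib

section
/- For a positive integer M, lattice L = √M·ℤ with dual L' = (1/√M)·ℤ, and for k = 0 or 1, the theta function θ_{k,μ}(τ) = Σ_{n ∈ L+μ} n^k q^{n²/2} (where q = e^{2πiτ}, μ ∈ L'/L) satisfies the S-transformation θ_{k,μ}(-1/τ) = ((-1)^k (-i)^{1/2} / √M) · τ^{k+1/2} · Σ_{ν ∈ L'/L} e^{2πi μν} θ_{k,ν}(τ). -/
/-!
Write `μ = ℓ/√M` and `σ = τ/M`. Since `√M n + μ = √M (n + ℓ/M)`, the value `θ_{k,μ}(-1/τ)` is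
`√M^k` times the shifted series `∑ₙ (n + a)^k e^{πi (n+a)² (-1/σ)}` with `a = ℓ/M`. The Jacobi
transformation formula (for `k = 0` that of `jacobiTheta₂`, for `k = 1` that of its `z`-derivative)
turns this into `(-1)^k (-iσ)^{1/2} σ^k ∑ₘ m^k e^{2πi m a + πi m² σ}`. Splitting `m = nM + ν` by its
residue modulo `M` regroups the last series into the twisted sum of the `θ_{k,ν/√M}(τ)`: the phase
`e^{2πi m ℓ/M}` equals `e^{2πi μ ν/√M}` because `e^{2πi n ℓ} = 1`. Finally
`(-iτ/M)^{1/2} = (-i)^{1/2} τ^{1/2} / √M`, as `arg(-i) + arg τ ∈ (-π/2, π/2)` for `τ` in the upper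
half plane.
-/

open Complex

/-- The theta function `θ_{k,μ}(τ) = ∑_{n ∈ √M ℤ + μ} n^k e^{π i n² τ}`. -/
noncomputable def theta (M : ℕ) (k : ℕ) (μ : ℝ) (τ : ℂ) : ℂ :=
  ∑' n : ℤ, ((Real.sqrt M * n + μ : ℝ) : ℂ) ^ k *
    Complex.exp (Real.pi * Complex.I * ((Real.sqrt M * n + μ : ℝ) : ℂ) ^ 2 * τ)

open Real

lemma ne_zero_of_im_pos {z : ℂ} (hz : 0 < z.im) : z ≠ 0 :=
  fun h ↦ by simp [h] at hz

lemma mul_cpow_of_arg_add_mem {x y : ℂ} (hx : x ≠ 0) (hy : y ≠ 0)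
    (h : arg x + arg y ∈ Set.Ioc (-π) π) (c : ℂ) : (x * y) ^ c = x ^ c * y ^ c := by
  rw [cpow_def_of_ne_zero (mul_ne_zero hx hy), log_mul hx hy h, add_mul, Complex.exp_add,
    cpow_def_of_ne_zero hx, cpow_def_of_ne_zero hy]

lemma div_ofReal_cpow (z : ℂ) {r : ℝ} (hr : 0 < r) (c : ℂ) :
    (z / r) ^ c = z ^ c / (r : ℂ) ^ c := by
  rcases eq_or_ne z 0 with rfl | hz
  · rcases eq_or_ne c 0 with rfl | hc <;> simp [*]
  have hr0 : (r : ℂ) ≠ 0 := ofReal_ne_zero.mpr hr.ne'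
  have harg : arg (z / r) + arg r ∈ Set.Ioc (-π) π := by
    rw [arg_ofReal_of_nonneg hr.le, add_zero]
    exact ⟨neg_pi_lt_arg _, arg_le_pi _⟩
  rw [eq_div_iff (cpow_ne_zero_iff.mpr (Or.inl hr0)),
    ← mul_cpow_of_arg_add_mem (div_ne_zero hz hr0) hr0 harg, div_mul_cancel₀ _ hr0]

lemma neg_I_mul_div_cpow_half {τ : ℂ} (hτ : 0 < τ.im) {r : ℝ} (hr : 0 < r) :
    (-I * (τ / r)) ^ (1 / 2 : ℂ) = (-I) ^ (1 / 2 : ℂ) * τ ^ (1 / 2 : ℂ) / √r := by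
  have harg : arg (-I) + arg τ ∈ Set.Ioc (-π) π := by
    have harg_nonneg := arg_nonneg_iff.mpr hτ.le
    have harg_le := arg_le_pi τ
    rw [arg_neg_I]
    constructor <;> linarith [pi_pos]
  rw [← mul_div_assoc, div_ofReal_cpow _ hr, mul_cpow_of_arg_add_mem (neg_ne_zero.mpr I_ne_zero)
    (ne_zero_of_im_pos hτ) harg, sqrt_eq_rpow, ofReal_cpow hr.le]
  norm_num

lemma exp_sq_add_eq_mul_jacobiTheta₂_term (n : ℤ) (a τ : ℂ) :
    cexp (π * I * (n + a) ^ 2 * τ) = cexp (π * I * a ^ 2 * τ) * jacobiTheta₂_term n (a * τ) τ := by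
  rw [jacobiTheta₂_term, ← Complex.exp_add]
  ring_nf

lemma tsum_exp_sq_add_neg_inv (a : ℂ) {σ : ℂ} (hσ : σ ≠ 0) :
    ∑' n : ℤ, cexp (π * I * (n + a) ^ 2 * (-1 / σ)) =
      (-I * σ) ^ (1 / 2 : ℂ) * jacobiTheta₂ a σ := by
  have hroot : (-I * σ) ^ (1 / 2 : ℂ) ≠ 0 := by simp [hσ]
  have h := jacobiTheta₂_functional_equation (-a) σ
  rw [jacobiTheta₂_neg_left] at h
  simp_rw [exp_sq_add_eq_mul_jacobiTheta₂_term _ a, tsum_mul_left]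
  rw [← jacobiTheta₂, h, ← mul_assoc, ← mul_assoc, mul_one_div_cancel hroot, one_mul]
  congr 2 <;> ring

lemma tsum_mul_exp_sq_add_neg_inv (a : ℂ) {σ : ℂ} (hσ : 0 < σ.im) :
    ∑' n : ℤ, (n + a) * cexp (π * I * (n + a) ^ 2 * (-1 / σ)) =
      -((-I * σ) ^ (1 / 2 : ℂ) * σ) * jacobiTheta₂' a σ / (2 * π * I) := by
  have hσ0 := ne_zero_of_im_pos hσ
  have hinv : 0 < (-1 / σ).im := by
    rw [neg_div, neg_im, one_div, inv_im, neg_div, neg_neg]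
    exact div_pos hσ (normSq_pos.mpr hσ0)
  have hsplit : ∑' n : ℤ, (n + a) * cexp (π * I * (n + a) ^ 2 * (-1 / σ)) =
      cexp (π * I * a ^ 2 * (-1 / σ)) * (jacobiTheta₂' (a * (-1 / σ)) (-1 / σ) / (2 * π * I) +
        a * jacobiTheta₂ (a * (-1 / σ)) (-1 / σ)) := by
    rw [jacobiTheta₂', jacobiTheta₂, ← tsum_div_const, ← tsum_mul_left,
      ← ((hasSum_jacobiTheta₂'_term _ hinv).summable.div_const _).tsum_add
        ((hasSum_jacobiTheta₂_term _ hinv).summable.mul_left _), ← tsum_mul_left]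
    refine tsum_congr fun n ↦ ?_
    rw [exp_sq_add_eq_mul_jacobiTheta₂_term, jacobiTheta₂'_term]
    field_simp
  have h := jacobiTheta₂'_functional_equation (-a) σ
  rw [jacobiTheta₂'_neg_left] at h
  rw [hsplit]
  field_simp at h ⊢
  linear_combination -h

lemma summable_pow_mul_jacobiTheta₂_term (k : ℕ) (z : ℂ) {τ : ℂ} (hτ : 0 < τ.im) :
    Summable fun n : ℤ ↦ (n : ℂ) ^ k * jacobiTheta₂_term n z τ := by
  refine .of_norm_bounded (summable_pow_mul_jacobiTheta₂_term_bound |z.im| hτ k) fun n ↦ ?_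
  rw [norm_mul, norm_pow, norm_intCast, ← Int.cast_abs]
  gcongr
  exact norm_jacobiTheta₂_term_le hτ le_rfl le_rfl n

lemma tsum_pow_mul_exp_sq_add_neg_inv {k : ℕ} (hk : k ≤ 1) (a : ℂ) {σ : ℂ} (hσ : 0 < σ.im) :
    ∑' n : ℤ, ((n : ℂ) + a) ^ k * cexp (π * I * (n + a) ^ 2 * (-1 / σ)) =
      (-1) ^ k * (-I * σ) ^ (1 / 2 : ℂ) * σ ^ k *
        ∑' m : ℤ, (m : ℂ) ^ k * jacobiTheta₂_term m a σ := by
  interval_cases k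
  · simpa [jacobiTheta₂] using tsum_exp_sq_add_neg_inv a (ne_zero_of_im_pos hσ)
  · simp only [pow_one]
    rw [tsum_mul_exp_sq_add_neg_inv a hσ, jacobiTheta₂']
    simp only [jacobiTheta₂'_term, mul_assoc, tsum_mul_left]
    field_simp

variable {α : Type*} [AddCommGroup α] [UniformSpace α] [IsUniformAddGroup α] [CompleteSpace α]
  [T0Space α] in
lemma tsum_int_eq_sum_range_tsum_mul_add {M : ℕ} (hM : 0 < M) {f : ℤ → α} (hf : Summable f) :
    ∑' m, f m = ∑ ν ∈ Finset.range M, ∑' n : ℤ, f (n * M + ν) := by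
  have : NeZero M := ⟨hM.ne'⟩
  let e : Fin M × ℤ ≃ ℤ := (Equiv.prodComm _ _).trans (Int.divModEquiv M).symm
  rw [← e.tsum_eq, Summable.tsum_prod (f := fun p ↦ f (e p)) (e.summable_iff.mpr hf), tsum_fintype,
    ← Fin.sum_univ_eq_sum_range (fun ν ↦ ∑' n : ℤ, f (n * M + ν))]
  rfl

lemma ofReal_sqrt_natCast_sq (M : ℕ) : ((√M : ℝ) : ℂ) ^ 2 = M := by
  rw [← ofReal_pow, sq_sqrt (Nat.cast_nonneg M), ofReal_natCast]

lemma ofReal_sqrt_natCast_ne_zero {M : ℕ} (hM : 0 < M) : ((√M : ℝ) : ℂ) ≠ 0 :=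
  ofReal_ne_zero.mpr (sqrt_pos.mpr (Nat.cast_pos.mpr hM)).ne'

lemma theta_intCast_div_sqrt {M : ℕ} (hM : 0 < M) (k : ℕ) (ℓ : ℤ) (τ : ℂ) :
    theta M k (ℓ / √M) τ =
      (√M : ℂ) ^ k *
        ∑' n : ℤ, ((n : ℂ) + ℓ / M) ^ k * cexp (π * I * (n + ℓ / M) ^ 2 * (M * τ)) := by
  have hsqrt := ofReal_sqrt_natCast_ne_zero hM
  rw [theta, ← tsum_mul_left]
  refine tsum_congr fun n ↦ ?_
  have hx : ((√M * n + ℓ / √M : ℝ) : ℂ) = √M * (n + ℓ / M) := by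
    push_cast
    rw [← ofReal_sqrt_natCast_sq]
    field_simp
  rw [hx, mul_pow, mul_pow, ofReal_sqrt_natCast_sq]
  ring_nf

lemma sqrt_pow_mul_exp_mul_theta {M : ℕ} (hM : 0 < M) (k : ℕ) (ℓ ν : ℤ) (τ : ℂ) :
    (√M : ℂ) ^ k * (cexp (2 * π * I * (ℓ / √M : ℝ) * (ν / √M : ℝ)) * theta M k (ν / √M) τ) =
      ∑' n : ℤ, ((n * M + ν : ℤ) : ℂ) ^ k * jacobiTheta₂_term (n * M + ν) (ℓ / M) (τ / M) := by
  have hMℂ : (M : ℂ) ≠ 0 := Nat.cast_ne_zero.mpr hM.ne'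
  have hsqrt := ofReal_sqrt_natCast_ne_zero hM
  rw [theta_intCast_div_sqrt hM, ← tsum_mul_left, ← tsum_mul_left, ← tsum_mul_left]
  refine tsum_congr fun n ↦ ?_
  have hpow : (√M : ℂ) ^ k * (√M : ℂ) ^ k * ((n : ℂ) + ν / M) ^ k =
      ((n * M + ν : ℤ) : ℂ) ^ k := by
    rw [← mul_pow, ← mul_pow, ← sq, ofReal_sqrt_natCast_sq]
    push_cast
    field_simp
  have hexp : jacobiTheta₂_term (n * M + ν) (ℓ / M) (τ / M) =
      cexp (2 * π * I * (ℓ / √M : ℝ) * (ν / √M : ℝ)) *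
        cexp (π * I * (n + ν / M) ^ 2 * (M * τ)) := by
    -- the two phases differ by `e^{-2πi ℓ n} = 1`
    rw [jacobiTheta₂_term, ← mul_one (cexp (_ + _)), ← exp_int_mul_two_pi_mul_I (-(ℓ * n)),
      ← Complex.exp_add, ← Complex.exp_add]
    congr 1
    push_cast
    rw [← ofReal_sqrt_natCast_sq]
    field_simp
    ring
  rw [hexp, ← hpow]
  ring

lemma tsum_pow_mul_jacobiTheta₂_term_eq_sum_theta {M : ℕ} (hM : 0 < M) (k : ℕ) (ℓ : ℤ) {τ : ℂ}
    (hτ : 0 < τ.im) :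
    ∑' m : ℤ, (m : ℂ) ^ k * jacobiTheta₂_term m (ℓ / M) (τ / M) = (√M : ℂ) ^ k *
      ∑ ν ∈ Finset.range M, cexp (2 * π * I * (ℓ / √M : ℝ) * (ν / √M : ℝ)) *
        theta M k (ν / √M) τ := by
  have hσ : 0 < (τ / M).im := by rw [div_natCast_im]; positivity
  rw [tsum_int_eq_sum_range_tsum_mul_add hM (summable_pow_mul_jacobiTheta₂_term k _ hσ),
    Finset.mul_sum]
  refine Finset.sum_congr rfl fun ν _ ↦ ?_
  exact_mod_cast (sqrt_pow_mul_exp_mul_theta hM k ℓ ν τ).symm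

theorem theta_S_transform_k01 (M : ℕ) (hM : 0 < M) (μ : ℝ)
    (hμ : ∃ ℓ : ℤ, μ = ℓ / Real.sqrt M) (k : ℕ) (hk : k = 0 ∨ k = 1)
    (τ : ℂ) (hτ : 0 < τ.im) :
    theta M k μ (-1 / τ) =
      ((-1 : ℂ) ^ k * (-Complex.I) ^ ((1 : ℂ) / 2) / (Real.sqrt M : ℂ)) *
        τ ^ ((k : ℂ) + 1 / 2) *
        ∑ ν ∈ Finset.range M,
          Complex.exp (2 * Real.pi * Complex.I * μ * (ν / Real.sqrt M : ℝ)) *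
            theta M k (ν / Real.sqrt M) τ := by
  obtain ⟨ℓ, rfl⟩ := hμ
  have hMℂ : (M : ℂ) ≠ 0 := Nat.cast_ne_zero.mpr hM.ne'
  have hσ : 0 < (τ / M).im := by rw [div_natCast_im]; positivity
  have hroot := neg_I_mul_div_cpow_half hτ (Nat.cast_pos.mpr hM : (0 : ℝ) < M)
  rw [ofReal_natCast] at hroot
  have hscale : (√M : ℂ) ^ k * (√M : ℂ) ^ k * (τ / M) ^ k = τ ^ k := by
    rw [← mul_pow, ← mul_pow, ← sq, ofReal_sqrt_natCast_sq, mul_div_cancel₀ _ hMℂ]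
  rw [theta_intCast_div_sqrt hM, show (M : ℂ) * (-1 / τ) = -1 / (τ / M) by field_simp,
    tsum_pow_mul_exp_sq_add_neg_inv (by omega) _ hσ,
    tsum_pow_mul_jacobiTheta₂_term_eq_sum_theta hM k ℓ hτ, hroot,
    cpow_add _ _ (ne_zero_of_im_pos hτ), cpow_natCast]
  set S := ∑ ν ∈ Finset.range M, cexp (2 * π * I * (ℓ / √M : ℝ) * (ν / √M : ℝ)) *
    theta M k (ν / √M) τ
  linear_combination (-1) ^ k * (-I) ^ (1 / 2 : ℂ) * τ ^ (1 / 2 : ℂ) / √M * S * hscale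
end

section
/- For τ, w ∈ ℍ and F_{0,τ,w}(x) = √(i(w-τ)) · erf(-i√(πi(w-τ)) x) · e^{πi x² τ}, taking the derivative in x of the Fourier transform identity F(F_{0,τ,w})(x) = i^{1/2} w^{1/2} F_{0,-1/τ,-1/w}(x) yields F(F_{1,τ,w})(x) = i^{1/2} w^{1/2} (τ^{-1} F_{1,-1/τ,-1/w}(x) − (1/(πi)) · ((w−τ)/(τw)) · e^{−πi x²/w}), where F_{k,τ,w}(x) = √(i(w-τ)) x^k erf(-i√(πi(w-τ)) x) e^{πi x² τ}. -/
/-!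
Multiplication by `y` before a Fourier transform is differentiation after it:
`𝓕(y f) = -(2πi)⁻¹ (𝓕 f)'`, which applies because `F_{k,τ,w}` has Gaussian decay when
`τ, w ∈ ℍ`. So it suffices to differentiate the right-hand side of the `k = 0` identity. Since
`erf' z = (2/√π) e^{-z²}`, the derivative of `F_{0,τ,w}` is
`2πiτ x F_{0,τ,w}(x) + 2 (w - τ) e^{πi x² w}`: the Gaussian coming from `erf'` combines with
`e^{πi x² τ}` into `e^{πi x² w}`, and the two square roots multiply to `√π (w - τ)`.
Evaluating at `(-1/τ, -1/w)` gives the formula.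
-/

open Complex MeasureTheory

/-- The error function `erf(z) = (2/√π) ∫₀^z e^{-t²} dt`, extended to complex arguments. -/
noncomputable def cerf (z : ℂ) : ℂ :=
  (2 / Real.sqrt Real.pi) * z * ∫ t in (0 : ℝ)..1, Complex.exp (-((t : ℂ) * z) ^ 2)

/-- Bringmann–Nazaroglu's function `F_{k,τ,w}(x)`. -/
noncomputable def Ffun (k : ℕ) (τ w : ℂ) (x : ℝ) : ℂ :=
  (Complex.I * (w - τ)) ^ ((1 : ℂ) / 2) * (x : ℂ) ^ k *
    cerf (-Complex.I * (Real.pi * Complex.I * (w - τ)) ^ ((1 : ℂ) / 2) * x) *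
    Complex.exp (Real.pi * Complex.I * (x : ℂ) ^ 2 * τ)

open scoped FourierTransform Real

lemma ofReal_mul_cpow {r : ℝ} (hr : 0 ≤ r) (z s : ℂ) :
    ((r : ℂ) * z) ^ s = (r : ℂ) ^ s * z ^ s := by
  rcases eq_or_ne s 0 with rfl | hs
  · simp
  rcases hr.eq_or_lt with rfl | hr
  · simp [zero_cpow hs]
  rcases eq_or_ne z 0 with rfl | hz
  · simp [zero_cpow hs]
  have hr' : (r : ℂ) ≠ 0 := ofReal_ne_zero.mpr hr.ne'
  rw [cpow_def_of_ne_zero (mul_ne_zero hr' hz), log_ofReal_mul hr hz, ofReal_log hr.le,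
    add_mul, exp_add, ← cpow_def_of_ne_zero hr', ← cpow_def_of_ne_zero hz]

lemma ofReal_cpow_half {r : ℝ} (hr : 0 ≤ r) : (r : ℂ) ^ ((1 : ℂ) / 2) = √r := by
  rw [Real.sqrt_eq_rpow, ofReal_cpow hr]; norm_num

lemma cpow_half_sq (z : ℂ) : (z ^ ((1 : ℂ) / 2)) ^ 2 = z := by
  rw [one_div]; exact cpow_ofNat_inv_pow z 2

lemma fourier_eq_integral_mul_cexp (f : ℝ → ℂ) (x : ℝ) :
    𝓕 f x = ∫ y : ℝ, f y * exp (-(2 * π * I * x * y)) := by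
  rw [Real.fourier_real_eq_integral_exp_smul]
  congr 1; ext y
  rw [smul_eq_mul, mul_comm]; push_cast; ring_nf

lemma hasDerivAt_fourier_of_integrable_mul {f : ℝ → ℂ} (hf : Integrable f)
    (hf' : Integrable fun y : ℝ => (y : ℂ) * f y) (x : ℝ) :
    HasDerivAt (𝓕 f) (-2 * π * I * 𝓕 (fun y : ℝ => (y : ℂ) * f y) x) x := by
  refine (Real.hasDerivAt_fourier hf (by simpa only [real_smul] using hf') x).congr_deriv ?_
  rw [fourier_eq_integral_mul_cexp, fourier_eq_integral_mul_cexp, ← integral_const_mul]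
  congr 1; ext y
  rw [smul_eq_mul]; ring

lemma cerf_ofReal_mul (b : ℂ) (x : ℝ) :
    cerf (b * x) = 2 / (√π : ℂ) * b * ∫ s in (0 : ℝ)..x, exp (-(b * s) ^ 2) := by
  rcases eq_or_ne x 0 with rfl | hx
  · simp [cerf]
  have hsub := intervalIntegral.integral_comp_mul_left (a := 0) (b := 1)
    (fun s : ℝ => exp (-(b * s) ^ 2)) hx
  simp only [mul_zero, mul_one, real_smul] at hsub
  have hrescale : ∫ t in (0 : ℝ)..1, exp (-((t : ℂ) * (b * x)) ^ 2)
      = ∫ t in (0 : ℝ)..1, exp (-(b * ((x * t : ℝ) : ℂ)) ^ 2) := by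
    congr 1; ext t; push_cast; ring_nf
  have hx' : (x : ℂ) ≠ 0 := ofReal_ne_zero.mpr hx
  rw [cerf, hrescale, hsub, ofReal_inv]
  field_simp

lemma hasDerivAt_cerf_ofReal_mul (b : ℂ) (x : ℝ) :
    HasDerivAt (fun x : ℝ => cerf (b * x)) (2 / (√π : ℂ) * b * exp (-(b * x) ^ 2)) x := by
  have hcont : Continuous fun s : ℝ => exp (-(b * s) ^ 2) := by fun_prop
  simpa only [cerf_ofReal_mul] using
    ((hcont.integral_hasStrictDerivAt 0 x).hasDerivAt.const_mul (2 / (√π : ℂ) * b))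

lemma norm_cerf_le (z : ℂ) :
    ‖cerf z‖ ≤ 2 / √π * ‖z‖ * Real.exp (max 0 (-(z ^ 2).re)) := by
  have hbd : ∀ t ∈ Set.uIoc (0 : ℝ) 1,
      ‖exp (-((t : ℂ) * z) ^ 2)‖ ≤ Real.exp (max 0 (-(z ^ 2).re)) := by
    intro t ht
    rw [Set.uIoc_of_le zero_le_one] at ht
    have hre : (-((t : ℂ) * z) ^ 2).re = t ^ 2 * -(z ^ 2).re := by
      rw [mul_pow, ← ofReal_pow, ← mul_neg, re_ofReal_mul, neg_re]
    rw [norm_exp, Real.exp_le_exp, hre]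
    have ht2 : t ^ 2 ≤ 1 := by nlinarith [ht.1, ht.2]
    rcases le_total 0 (-(z ^ 2).re) with h | h
    · exact (mul_le_of_le_one_left h ht2).trans (le_max_right _ _)
    · exact (mul_nonpos_of_nonneg_of_nonpos (sq_nonneg t) h).trans (le_max_left _ _)
  have hI := intervalIntegral.norm_integral_le_of_norm_le_const hbd
  rw [sub_zero, abs_one, mul_one] at hI
  have h2 : ‖(2 / (√π : ℂ))‖ = 2 / √π := by
    rw [norm_div, norm_real, Real.norm_of_nonneg (Real.sqrt_nonneg _)]; norm_num
  rw [cerf, norm_mul, norm_mul, h2]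
  gcongr

lemma Ffun_succ (k : ℕ) (τ w : ℂ) (x : ℝ) : Ffun (k + 1) τ w x = x * Ffun k τ w x := by
  simp only [Ffun]; ring

lemma neg_I_mul_cpow_half_sq (u : ℂ) :
    (-I * (π * I * u) ^ ((1 : ℂ) / 2)) ^ 2 = -(π * I * u) := by
  rw [mul_pow, cpow_half_sq, neg_sq, I_sq]; ring

lemma cpow_half_mul_neg_I_mul_cpow_half (u : ℂ) :
    (I * u) ^ ((1 : ℂ) / 2) * (-I * (π * I * u) ^ ((1 : ℂ) / 2)) = √π * u := by
  rw [mul_assoc (π : ℂ), ofReal_mul_cpow Real.pi_pos.le, ofReal_cpow_half Real.pi_pos.le]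
  linear_combination (-I * √π) * cpow_half_sq (I * u) - √π * u * I_sq

lemma hasDerivAt_Ffun_zero (τ w : ℂ) (x : ℝ) :
    HasDerivAt (Ffun 0 τ w)
      (2 * π * I * τ * x * Ffun 0 τ w x + 2 * (w - τ) * exp (π * I * (x : ℂ) ^ 2 * w))
      x := by
  set A := (I * (w - τ)) ^ ((1 : ℂ) / 2)
  set b := -I * (π * I * (w - τ)) ^ ((1 : ℂ) / 2)
  have hF : Ffun 0 τ w =
      fun x : ℝ => A * (cerf (b * x) * exp (π * I * (x : ℂ) ^ 2 * τ)) := by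
    ext y; simp only [Ffun, pow_zero, mul_one]; ring
  have hquad : HasDerivAt (fun y : ℂ => π * I * y ^ 2 * τ) (π * I * (2 * x) * τ) x := by
    simpa using ((hasDerivAt_pow 2 (x : ℂ)).const_mul (π * I)).mul_const τ
  have hderiv := ((hasDerivAt_cerf_ofReal_mul b x).mul hquad.cexp.comp_ofReal).const_mul A
  have hgauss : exp (-(b * x) ^ 2) * exp (π * I * (x : ℂ) ^ 2 * τ)
      = exp (π * I * (x : ℂ) ^ 2 * w) := by
    rw [← exp_add]; congr 1
    linear_combination (-(x : ℂ) ^ 2) * neg_I_mul_cpow_half_sq (w - τ)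
  have hAb : A * (2 / √π * b) = 2 * (w - τ) := by
    rw [mul_left_comm, cpow_half_mul_neg_I_mul_cpow_half]; field_simp
  rw [hF]
  refine hderiv.congr_deriv ?_
  rw [mul_assoc _ (exp _), hgauss]
  linear_combination exp (π * I * (x : ℂ) ^ 2 * w) * hAb

lemma exists_norm_Ffun_le (k : ℕ) (τ w : ℂ) : ∃ C, ∀ y : ℝ,
    ‖Ffun k τ w y‖ ≤ C * (|y| ^ (k + 1) * Real.exp (-(π * min τ.im w.im) * y ^ 2)) := by
  set A := (I * (w - τ)) ^ ((1 : ℂ) / 2)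
  set b := -I * (π * I * (w - τ)) ^ ((1 : ℂ) / 2)
  refine ⟨‖A‖ * (2 / √π) * ‖b‖, fun y => ?_⟩
  have hnorm_exp : ‖exp (π * I * (y : ℂ) ^ 2 * τ)‖ = Real.exp (-(π * τ.im) * y ^ 2) := by
    rw [norm_exp]; congr 1; simp [← ofReal_pow]; ring
  have hre : -((b * y) ^ 2).re = π * (τ.im - w.im) * y ^ 2 := by
    rw [mul_pow, neg_I_mul_cpow_half_sq]; simp [← ofReal_pow]; ring
  have hcerf : ‖cerf (b * y)‖ ≤ 2 / √π * (‖b‖ * |y|) *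
      Real.exp (max 0 (π * (τ.im - w.im) * y ^ 2)) := by
    simpa only [norm_mul, norm_real, Real.norm_eq_abs, hre] using norm_cerf_le (b * y)
  have hgauss : Real.exp (max 0 (π * (τ.im - w.im) * y ^ 2)) * Real.exp (-(π * τ.im) * y ^ 2)
      ≤ Real.exp (-(π * min τ.im w.im) * y ^ 2) := by
    rw [← Real.exp_add, Real.exp_le_exp]
    suffices max 0 (π * (τ.im - w.im) * y ^ 2) ≤ π * (τ.im - min τ.im w.im) * y ^ 2 by
      linarith
    refine max_le ?_ ?_
    · have := sub_nonneg.2 (min_le_left τ.im w.im)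
      positivity
    · gcongr; exact min_le_right _ _
  calc ‖Ffun k τ w y‖
      = ‖A‖ * |y| ^ k * ‖cerf (b * y)‖ * Real.exp (-(π * τ.im) * y ^ 2) := by
        rw [Ffun, norm_mul, norm_mul, norm_mul, hnorm_exp, norm_pow, norm_real, Real.norm_eq_abs]
    _ ≤ ‖A‖ * |y| ^ k * (2 / √π * (‖b‖ * |y|) *
          Real.exp (max 0 (π * (τ.im - w.im) * y ^ 2))) *
          Real.exp (-(π * τ.im) * y ^ 2) := by gcongr
    _ = ‖A‖ * (2 / √π) * ‖b‖ * (|y| ^ (k + 1) *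
          (Real.exp (max 0 (π * (τ.im - w.im) * y ^ 2)) *
            Real.exp (-(π * τ.im) * y ^ 2))) := by ring
    _ ≤ _ := by gcongr

lemma continuous_Ffun (k : ℕ) (τ w : ℂ) : Continuous (Ffun k τ w) := by
  have hcerf := continuous_iff_continuousAt.2 fun x =>
    (hasDerivAt_cerf_ofReal_mul (-I * (π * I * (w - τ)) ^ ((1 : ℂ) / 2)) x).continuousAt
  unfold Ffun
  fun_prop

lemma integrable_Ffun (k : ℕ) {τ w : ℂ} (hτ : 0 < τ.im) (hw : 0 < w.im) :
    Integrable (Ffun k τ w) := by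
  obtain ⟨C, hC⟩ := exists_norm_Ffun_le k τ w
  have hm : 0 < π * min τ.im w.im := mul_pos Real.pi_pos (lt_min hτ hw)
  have hgauss := (integrable_rpow_mul_exp_neg_mul_sq hm
    (s := ((k + 1 : ℕ) : ℝ)) (neg_one_lt_zero.trans_le (Nat.cast_nonneg _))).abs.const_mul C
  simp only [Real.rpow_natCast, abs_mul, abs_pow, Real.abs_exp] at hgauss
  exact hgauss.mono' (continuous_Ffun k τ w).aestronglyMeasurable (.of_forall hC)

theorem fourier_F_one (τ w : ℂ) (hτ : 0 < τ.im) (hw : 0 < w.im)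
    (h0 : ∀ x : ℝ, (∫ y : ℝ, Ffun 0 τ w y * Complex.exp (-(2 * Real.pi * Complex.I * x * y))) =
      Complex.I ^ ((1 : ℂ) / 2) * w ^ ((1 : ℂ) / 2) * Ffun 0 (-1 / τ) (-1 / w) x) :
    ∀ x : ℝ, (∫ y : ℝ, Ffun 1 τ w y * Complex.exp (-(2 * Real.pi * Complex.I * x * y))) =
      Complex.I ^ ((1 : ℂ) / 2) * w ^ ((1 : ℂ) / 2) *
        (τ⁻¹ * Ffun 1 (-1 / τ) (-1 / w) x -
          (1 / (Real.pi * Complex.I)) * ((w - τ) / (τ * w)) *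
            Complex.exp (-(Real.pi * Complex.I * (x : ℂ) ^ 2) / w)) := by
  intro x
  have hτ0 : τ ≠ 0 := fun h => by simp [h] at hτ
  have hw0 : w ≠ 0 := fun h => by simp [h] at hw
  simp_rw [← fourier_eq_integral_mul_cexp] at h0 ⊢
  have hx_mul : (fun y : ℝ => (y : ℂ) * Ffun 0 τ w y) = Ffun 1 τ w :=
    funext fun y => (Ffun_succ 0 τ w y).symm
  have hderiv := hasDerivAt_fourier_of_integrable_mul (integrable_Ffun 0 hτ hw)
    (hx_mul ▸ integrable_Ffun 1 hτ hw) x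
  rw [funext h0, hx_mul] at hderiv
  have hfourier := hderiv.unique ((hasDerivAt_Ffun_zero _ _ x).const_mul _)
  have hexp : exp (π * I * (x : ℂ) ^ 2 * (-1 / w)) = exp (-(π * I * (x : ℂ) ^ 2) / w) := by
    congr 1; ring
  refine mul_left_cancel₀ (by simp [Real.pi_ne_zero] : -2 * (π : ℂ) * I ≠ 0) ?_
  rw [hfourier, Ffun_succ 0, hexp]
  field_simp
  ring
end

section
/- For k ≥ 0 and μ ∈ L'/L, the false theta function θ̃_{k,μ}(τ) = Σ_{n ∈ L+μ} sgn(n) n^k e^{πi n² τ} admits the integral expression θ̃_{k,μ}(τ) = −i ∫_τ^{i∞} θ_{k+1,μ}(z)/√(−i(z−τ)) dz, where the path is vertical from τ to i∞ (shifted by any ε > 0 to avoid the branch cut) and θ_{k+1,μ}(z) decays exponentially as z → i∞. -/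
/-!
Along the vertical path `z = τ + it`, the summand of `θ_{k+1,μ}(z) / √t` at `n` is
`n^{k+1} e^{πin²τ} · e^{-πn²t} / √t`. The Gamma integral `∫₀^∞ e^{-rt} t^{-1/2} dt = √(π/r)`
with `r = πn²` turns it into `(n^{k+1} / |n|) e^{πin²τ} = sgn(n) n^k e^{πin²τ}`. The norms of
the summands integrate to at most `|n|^k e^{-πn² Im τ}`, which is summable over the lattice, so
sum and integral may be interchanged.
-/

open Complex MeasureTheory Set

/-- The false theta function `θ̃_{k,μ}(τ) = ∑_{n ∈ √M ℤ + μ} sgn(n) n^k e^{π i n² τ}`. -/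
noncomputable def thetaTilde (M : ℕ) (k : ℕ) (μ : ℝ) (τ : ℂ) : ℂ :=
  ∑' n : ℤ, (Real.sign (Real.sqrt M * n + μ) : ℂ) * ((Real.sqrt M * n + μ : ℝ) : ℂ) ^ k *
    Complex.exp (Real.pi * Complex.I * ((Real.sqrt M * n + μ : ℝ) : ℂ) ^ 2 * τ)

namespace FalseTheta

theorem rpow_neg_half_eq_inv_sqrt {t : ℝ} (ht : 0 ≤ t) : t ^ (-(1 / 2) : ℝ) = (√t)⁻¹ := by
  rw [Real.rpow_neg ht, Real.sqrt_eq_rpow]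

theorem integral_exp_neg_mul_div_sqrt {r : ℝ} (hr : 0 < r) :
    ∫ t in Ioi (0 : ℝ), Real.exp (-(r * t)) / √t = √Real.pi / √r := by
  have h := Real.integral_rpow_mul_exp_neg_mul_Ioi one_half_pos hr
  rw [Real.Gamma_one_half_eq, one_div r, Real.inv_rpow hr.le, ← Real.sqrt_eq_rpow] at h
  rw [div_eq_inv_mul _ √r, ← h]
  refine setIntegral_congr_fun measurableSet_Ioi fun t ht => ?_
  rw [show (1 / 2 - 1 : ℝ) = -(1 / 2) by norm_num, rpow_neg_half_eq_inv_sqrt (le_of_lt ht),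
    div_eq_mul_inv, mul_comm]

theorem integrableOn_exp_neg_mul_div_sqrt {r : ℝ} (hr : 0 < r) :
    IntegrableOn (fun t : ℝ => Real.exp (-(r * t)) / √t) (Ioi 0) := by
  refine (integrableOn_rpow_mul_exp_neg_mul_rpow (s := -(1 / 2)) (by norm_num) one_pos
    hr).congr_fun (fun t ht => ?_) measurableSet_Ioi
  dsimp only
  rw [Real.rpow_one, rpow_neg_half_eq_inv_sqrt (le_of_lt ht), neg_mul, div_eq_mul_inv, mul_comm]

theorem pow_succ_div_abs (a : ℝ) (k : ℕ) : a ^ (k + 1) / |a| = Real.sign a * a ^ k := by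
  rcases lt_trichotomy a 0 with h | rfl | h
  · rw [pow_succ, mul_div_assoc, abs_of_neg h, div_neg, div_self h.ne, Real.sign_of_neg h]
    ring
  · simp
  · rw [pow_succ, mul_div_assoc, abs_of_pos h, div_self h.ne', Real.sign_of_pos h]
    ring

theorem sqrt_pi_div_sqrt_pi_mul_sq (a : ℝ) : √Real.pi / √(Real.pi * a ^ 2) = |a|⁻¹ := by
  rw [Real.sqrt_mul Real.pi_pos.le, Real.sqrt_sq_eq_abs, div_mul_cancel_left₀
    (Real.sqrt_pos.mpr Real.pi_pos).ne']

theorem summable_abs_pow_mul_exp_neg_sq {c : ℝ} (hc : 0 < c) (μ : ℝ) (k : ℕ) {s : ℝ}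
    (hs : 0 < s) :
    Summable fun n : ℤ => |c * n + μ| ^ k * Real.exp (-(Real.pi * (c * n + μ) ^ 2 * s)) := by
  refine ((HurwitzKernelBounds.summable_f_int k (μ / c) (by positivity : 0 < c ^ 2 * s)).mul_left
    (c ^ k)).congr fun n => ?_
  have hshift : c * n + μ = c * (n + μ / c) := by field_simp
  rw [HurwitzKernelBounds.f_int, hshift, abs_mul, abs_of_pos hc]
  ring_nf

noncomputable def verticalSummand (k : ℕ) (τ : ℂ) (a t : ℝ) : ℂ :=
  (a : ℂ) ^ (k + 1) * cexp (Real.pi * I * (a : ℂ) ^ 2 * τ) *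
    ((Real.exp (-(Real.pi * a ^ 2 * t)) / √t : ℝ) : ℂ)

theorem neg_I_mul_vertical_cpow_half (τ : ℂ) {t : ℝ} (ht : 0 ≤ t) :
    (-I * ((τ + t * I) - τ)) ^ ((1 : ℂ) / 2) = (√t : ℂ) := by
  have hline : -I * ((τ + t * I) - τ) = t := by linear_combination (-(t : ℂ)) * I_sq
  rw [hline, Real.sqrt_eq_rpow, ofReal_cpow ht]
  norm_num

theorem exp_vertical (a : ℝ) (τ : ℂ) (t : ℝ) :
    cexp (Real.pi * I * (a : ℂ) ^ 2 * (τ + t * I)) =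
      cexp (Real.pi * I * (a : ℂ) ^ 2 * τ) * (Real.exp (-(Real.pi * a ^ 2 * t)) : ℂ) := by
  rw [ofReal_exp, ← Complex.exp_add]
  congr 1
  push_cast
  linear_combination (Real.pi * a ^ 2 * t : ℂ) * I_sq

theorem verticalSummand_eq (k : ℕ) (τ : ℂ) (a : ℝ) {t : ℝ} (ht : 0 ≤ t) :
    verticalSummand k τ a t =
      (a : ℂ) ^ (k + 1) * cexp (Real.pi * I * (a : ℂ) ^ 2 * (τ + t * I)) /
        (-I * ((τ + t * I) - τ)) ^ ((1 : ℂ) / 2) := by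
  rw [verticalSummand, neg_I_mul_vertical_cpow_half τ ht, exp_vertical, ofReal_div]
  ring

theorem verticalSummand_zero (k : ℕ) (τ : ℂ) : verticalSummand k τ 0 = 0 := by
  ext t
  simp [verticalSummand]

theorem integrableOn_verticalSummand (k : ℕ) (τ : ℂ) (a : ℝ) :
    IntegrableOn (verticalSummand k τ a) (Ioi 0) := by
  rcases eq_or_ne a 0 with rfl | ha
  · rw [verticalSummand_zero]
    exact integrableOn_zero
  · exact (integrableOn_exp_neg_mul_div_sqrt
      (by positivity : 0 < Real.pi * a ^ 2)).ofReal.const_mul _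

theorem integral_verticalSummand (k : ℕ) (τ : ℂ) (a : ℝ) :
    ∫ t in Ioi (0 : ℝ), verticalSummand k τ a t =
      Real.sign a * (a : ℂ) ^ k * cexp (Real.pi * I * (a : ℂ) ^ 2 * τ) := by
  rcases eq_or_ne a 0 with rfl | ha
  · simp [verticalSummand_zero]
  have hsign : (a : ℂ) ^ (k + 1) * (|a|⁻¹ : ℝ) = Real.sign a * (a : ℂ) ^ k := by
    exact_mod_cast (div_eq_mul_inv (a ^ (k + 1)) |a|).symm.trans (pow_succ_div_abs a k)
  simp only [verticalSummand]
  rw [integral_const_mul, integral_complex_ofReal,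
    integral_exp_neg_mul_div_sqrt (by positivity : 0 < Real.pi * a ^ 2),
    sqrt_pi_div_sqrt_pi_mul_sq, mul_right_comm, hsign]

theorem norm_pow_succ_mul_exp (k : ℕ) (τ : ℂ) (a : ℝ) :
    ‖(a : ℂ) ^ (k + 1) * cexp (Real.pi * I * (a : ℂ) ^ 2 * τ)‖ =
      |a| ^ (k + 1) * Real.exp (-(Real.pi * a ^ 2 * τ.im)) := by
  rw [norm_mul, norm_pow, norm_real, Real.norm_eq_abs, norm_exp]
  congr 2
  simp [← ofReal_pow, mul_re, mul_im]

-- Not an equality only because `0 ^ 0 = 1`.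
theorem integral_norm_verticalSummand_le (k : ℕ) (τ : ℂ) (a : ℝ) :
    ∫ t in Ioi (0 : ℝ), ‖verticalSummand k τ a t‖ ≤
      |a| ^ k * Real.exp (-(Real.pi * a ^ 2 * τ.im)) := by
  rcases eq_or_ne a 0 with rfl | ha
  · simp only [verticalSummand_zero, Pi.zero_apply, norm_zero, integral_zero]
    positivity
  have hnorm (t : ℝ) : ‖verticalSummand k τ a t‖ = |a| ^ (k + 1) *
      Real.exp (-(Real.pi * a ^ 2 * τ.im)) * (Real.exp (-(Real.pi * a ^ 2 * t)) / √t) := by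
    rw [verticalSummand, norm_mul, norm_pow_succ_mul_exp, norm_real, Real.norm_eq_abs,
      abs_of_nonneg (div_nonneg (Real.exp_pos _).le (Real.sqrt_nonneg t))]
  simp only [hnorm]
  rw [integral_const_mul, integral_exp_neg_mul_div_sqrt (by positivity : 0 < Real.pi * a ^ 2),
    sqrt_pi_div_sqrt_pi_mul_sq, pow_succ]
  refine le_of_eq ?_
  field_simp

end FalseTheta

open FalseTheta in
theorem falseTheta_integral_expression (M : ℕ) (hM : 0 < M) (μ : ℝ) (k : ℕ)
    (τ : ℂ) (hτ : 0 < τ.im) :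
    thetaTilde M k μ τ =
      -Complex.I * ∫ t in Set.Ioi (0 : ℝ),
        theta M (k + 1) μ (τ + (t : ℂ) * Complex.I) /
            (-Complex.I * ((τ + (t : ℂ) * Complex.I) - τ)) ^ ((1 : ℂ) / 2) * Complex.I := by
  set a : ℤ → ℝ := fun n => √M * n + μ
  have hintegrand : ∀ t ∈ Ioi (0 : ℝ), theta M (k + 1) μ (τ + t * I) /
      (-I * ((τ + t * I) - τ)) ^ ((1 : ℂ) / 2) * I = (∑' n, verticalSummand k τ (a n) t) * I := by
    intro t ht
    rw [theta, ← tsum_div_const]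
    exact congrArg (· * I)
      (tsum_congr fun n => (verticalSummand_eq k τ (a n) (le_of_lt ht)).symm)
  have hsummable : Summable fun n => ∫ t in Ioi (0 : ℝ), ‖verticalSummand k τ (a n) t‖ :=
    .of_nonneg_of_le (fun n => integral_nonneg fun t => norm_nonneg _)
      (fun n => integral_norm_verticalSummand_le k τ (a n))
      (summable_abs_pow_mul_exp_neg_sq (Real.sqrt_pos.mpr (Nat.cast_pos.mpr hM)) μ k hτ)
  rw [setIntegral_congr_fun measurableSet_Ioi hintegrand, integral_mul_const,
    ← integral_tsum_of_summable_integral_norm (fun n => integrableOn_verticalSummand k τ (a n))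
      hsummable, thetaTilde]
  have hI (X : ℂ) : -I * (X * I) = X := by linear_combination -X * I_sq
  rw [hI]
  exact tsum_congr fun n => (integral_verticalSummand k τ (a n)).symm
end

section
/- Let n ≥ 3 and define c_ε(k) = ((−1)^k / (P^k (n−3)!)) Σ_{l=k}^{n−3} (−2)^{−l} (n−2+Σ_{j=1}^n ε_j/p_j)^{l−k} · s(n−2, l+1) · C(l,k), where s(·,·) is the (unsigned-convention as in the paper) Stirling number of the first kind and C(l,k) the binomial coefficient. Then Σ_{ε ∈ {±1}^n} ε_1⋯ε_n c_ε(k) = 0 for every 0 ≤ k ≤ n−3. -/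
/-- Stirling numbers of the first kind: `s(0,0)=1`, `s(n,0)=s(0,k)=0`,
`s(n+1,k) = s(n,k-1) + n·s(n,k)`. -/
def stir : ℕ → ℕ → ℕ
  | 0, 0 => 1
  | 0, _ + 1 => 0
  | _ + 1, 0 => 0
  | n + 1, k + 1 => stir n k + n * stir n (k + 1)

/-!
Expanding `c_ε(k)` in `l`, every term is a multiple of `x_ε ^ (l - k)` with
`x_ε = n - 2 + ∑ ε_j / p_j` and `l - k ≤ n - 3 < n`. The signed sum
`∑_ε ε_1⋯ε_n f(c + ∑ ε_j a_j)` is a mixed finite difference of order `n`, so it kills every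
polynomial `f` of degree `< n`: summing out `ε_1` replaces `f` by `f(· + a_1) - f(· - a_1)`,
whose degree is smaller.
-/

open Polynomial

namespace Polynomial

variable {R : Type*} [CommRing R]

theorem degree_taylor_sub_taylor_lt {q : R[X]} (hq : q ≠ 0) (a b : R) :
    (taylor a q - taylor b q).degree < q.degree := by
  simpa only [degree_taylor] using
    degree_sub_lt_left (by rw [degree_taylor, degree_taylor]) ((taylor_eq_zero a q).not.mpr hq)
      (by rw [leadingCoeff_taylor, leadingCoeff_taylor])

theorem sum_prod_sign_mul_eval_eq_zero {n : ℕ} (q : R[X]) (hq : q.degree < n) (a : Fin n → R)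
    (c : R) :
    ∑ s : Fin n → Bool, (∏ j, (if s j then (1 : R) else -1)) *
      q.eval (c + ∑ j, (if s j then (1 : R) else -1) * a j) = 0 := by
  induction n generalizing q c with
  | zero => simp [degree_eq_bot.mp (by simpa using hq)]
  | succ n ih =>
    rcases eq_or_ne q 0 with rfl | hq0
    · simp
    have hdeg : (taylor (a 0) q - taylor (-a 0) q).degree < n := by
      have h := (Nat.WithBot.add_one_le_of_lt
        (degree_taylor_sub_taylor_lt hq0 (a 0) (-a 0))).trans_lt hq
      rw [Nat.cast_succ] at h
      exact lt_of_add_lt_add_right h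
    rw [← ih _ hdeg (fun i => a i.succ) c, ← (Fin.consEquiv fun _ => Bool).sum_comp,
      Fintype.sum_prod_type, Fintype.sum_bool, ← Finset.sum_add_distrib]
    refine Finset.sum_congr rfl fun t _ => ?_
    simp only [Fin.consEquiv_apply, Fin.prod_univ_succ, Fin.sum_univ_succ, Fin.cons_zero,
      Fin.cons_succ, if_true, Bool.false_eq_true, if_false, eval_sub, taylor_eval]
    ring_nf

end Polynomial

theorem sum_eps_c_eq_zero_general (n : ℕ) (hn : 3 ≤ n) (p : Fin n → ℕ) (k : ℕ) :
    ∑ s : Fin n → Bool,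
      (∏ j, (if s j then (1 : ℚ) else -1)) *
        ((-1 : ℚ) ^ k / ((∏ j, (p j : ℚ)) ^ k * (Nat.factorial (n - 3))) *
          ∑ l ∈ Finset.Icc k (n - 3),
            (-2 : ℚ) ^ (-(l : ℤ)) *
              ((n : ℚ) - 2 + ∑ j, (if s j then (1 : ℚ) else -1) / (p j : ℚ)) ^ (l - k) *
              (stir (n - 2) (l + 1) : ℚ) * (Nat.choose l k : ℚ)) = 0 := by
  simp only [Finset.mul_sum]
  rw [Finset.sum_comm]
  refine Finset.sum_eq_zero fun l hl => ?_
  have hdeg : ((X : ℚ[X]) ^ (l - k)).degree < n := by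
    rw [degree_X_pow, Nat.cast_lt]
    have := (Finset.mem_Icc.mp hl).2
    omega
  have hvanish := sum_prod_sign_mul_eval_eq_zero _ hdeg (fun j => (p j : ℚ)⁻¹) ((n : ℚ) - 2)
  simp only [eval_pow, eval_X] at hvanish
  calc _ = (-1 : ℚ) ^ k / ((∏ j, (p j : ℚ)) ^ k * (Nat.factorial (n - 3))) *
          ((-2 : ℚ) ^ (-(l : ℤ)) * (stir (n - 2) (l + 1) : ℚ) * (Nat.choose l k : ℚ)) *
        ∑ s : Fin n → Bool, (∏ j, (if s j then (1 : ℚ) else -1)) *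
          ((n : ℚ) - 2 + ∑ j, (if s j then (1 : ℚ) else -1) * (p j : ℚ)⁻¹) ^ (l - k) := by
        rw [Finset.mul_sum]
        refine Finset.sum_congr rfl fun s _ => ?_
        simp only [div_eq_mul_inv]
        ring
    _ = 0 := by rw [hvanish, mul_zero]

theorem sum_eps_c_eq_zero (n : ℕ) (hn : 3 ≤ n) (p : Fin n → ℕ) (hp : ∀ j, 2 ≤ p j)
    (hcop : ∀ i j, i ≠ j → Nat.Coprime (p i) (p j)) (k : ℕ) (hk : k ≤ n - 3) :
    ∑ s : Fin n → Bool,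
      (∏ j, (if s j then (1 : ℚ) else -1)) *
        ((-1 : ℚ) ^ k / ((∏ j, (p j : ℚ)) ^ k * (Nat.factorial (n - 3))) *
          ∑ l ∈ Finset.Icc k (n - 3),
            (-2 : ℚ) ^ (-(l : ℤ)) *
              ((n : ℚ) - 2 + ∑ j, (if s j then (1 : ℚ) else -1) / (p j : ℚ)) ^ (l - k) *
              (stir (n - 2) (l + 1) : ℚ) * (Nat.choose l k : ℚ)) = 0 :=
  sum_eps_c_eq_zero_general n hn p k
end
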